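/- arXiv:1610.03095 — 6 statements merged into one kernel-verified Lean document; each statement's English description precedes it below -/
import Mathlib

section
/- Let L ∈ ℝ^{m×n} and a ∈ ℝ^m, and set P = I − L L⁺. If P a ≠ 0, then the Moore–Penrose pseudoinverse of the augmented matrix (L, a) ∈ ℝ^{m×(n+1)} is the block matrix with top block L⁺ − L⁺ a bᵀ and bottom row bᵀ, where bᵀ = (P a)⁺ = (P a)ᵀ / ‖P a‖². -/
open Matrix

/-- `Lp` is the Moore–Penrose pseudoinverse of `L` (the four Penrose conditions). -/
def IsMoorePenrose {m n : ℕ} (L : Matrix (Fin m) (Fin n) ℝ)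
    (Lp : Matrix (Fin n) (Fin m) ℝ) : Prop :=
  L * Lp * L = L ∧ Lp * L * Lp = Lp ∧ (L * Lp)ᵀ = L * Lp ∧ (Lp * L)ᵀ = Lp * L

/-- The matrix `(L, a)` obtained by appending the column `a` to `L`. -/
def appendCol {m n : ℕ} (L : Matrix (Fin m) (Fin n) ℝ) (a : Fin m → ℝ) :
    Matrix (Fin m) (Fin (n + 1)) ℝ :=
  Matrix.of fun i j => Fin.lastCases (a i) (fun j' => L i j') j

/-!
Write `(L, a)` as the column-block matrix `[L | A]` and the candidate inverse as the row-block
matrix `B = [L⁺ - L⁺ A Y ; Y]`. Whenever `Y L = 0`, `Y A = 1` and `P A Y` is symmetric, the two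
products are `[L | A] B = L L⁺ + P A Y` and `B [L | A] = diag (L⁺ L, 1)`, and the four Penrose
conditions follow from those of `L⁺`. For a single column `a` and `Y = (P a)⁺` the three side
conditions hold because `P = 1 - L L⁺` is a symmetric idempotent killing `L`, so that
`(P a)ᵀ L = 0` and `(P a)ᵀ a = ‖P a‖²`.
-/

namespace Matrix

variable {R : Type*} {m n k m' n' : Type*} [Fintype m] [Fintype n] [Fintype k]

def IsPenroseInverse [CommRing R] (A : Matrix m n R) (X : Matrix n m R) : Prop :=
  A * X * A = A ∧ X * A * X = X ∧ (A * X)ᵀ = A * X ∧ (X * A)ᵀ = X * A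

namespace IsPenroseInverse

section CommRing

variable [CommRing R] {L : Matrix m n R} {X : Matrix n m R}

theorem submatrix [Fintype m'] [Fintype n'] (hX : IsPenroseInverse L X) (e₁ : m' ≃ m)
    (e₂ : n' ≃ n) : IsPenroseInverse (L.submatrix e₁ e₂) (X.submatrix e₂ e₁) := by
  obtain ⟨h₁, h₂, h₃, h₄⟩ := hX
  simp only [IsPenroseInverse, submatrix_mul_equiv, transpose_submatrix, h₁, h₂, h₃, h₄,
    and_self]

theorem transpose_one_sub_mul [DecidableEq m] (hX : IsPenroseInverse L X) :
    (1 - L * X)ᵀ = 1 - L * X := by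
  rw [transpose_sub, transpose_one, hX.2.2.1]

theorem one_sub_mul_mul_eq_zero [DecidableEq m] (hX : IsPenroseInverse L X) :
    (1 - L * X) * L = 0 := by
  rw [Matrix.sub_mul, Matrix.one_mul, hX.1, sub_self]

theorem isIdempotentElem_one_sub_mul [DecidableEq m] (hX : IsPenroseInverse L X) :
    IsIdempotentElem (1 - L * X) :=
  IsIdempotentElem.one_sub <| by rw [IsIdempotentElem, ← Matrix.mul_assoc, hX.1]

theorem one_sub_mul_mulVec_vecMul_eq_zero [DecidableEq m] (hX : IsPenroseInverse L X)
    (a : m → R) :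
    ((1 - L * X) *ᵥ a) ᵥ* L = 0 := by
  rw [← vecMul_transpose, vecMul_vecMul, hX.transpose_one_sub_mul, hX.one_sub_mul_mul_eq_zero,
    vecMul_zero]

theorem one_sub_mul_mulVec_dotProduct_self [DecidableEq m] (hX : IsPenroseInverse L X)
    (a : m → R) :
    ((1 - L * X) *ᵥ a) ⬝ᵥ ((1 - L * X) *ᵥ a) = ((1 - L * X) *ᵥ a) ⬝ᵥ a := by
  rw [dotProduct_mulVec, ← vecMul_transpose, vecMul_vecMul, hX.transpose_one_sub_mul,
    hX.isIdempotentElem_one_sub_mul.eq]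

theorem fromCols [DecidableEq m] [DecidableEq k] (hX : IsPenroseInverse L X)
    {A : Matrix m k R} {Y : Matrix k m R} (hYL : Y * L = 0) (hYA : Y * A = 1)
    (hsymm : ((1 - L * X) * A * Y)ᵀ = (1 - L * X) * A * Y) :
    IsPenroseInverse (fromCols L A) (fromRows (X - X * A * Y) Y) := by
  obtain ⟨h₁, h₂, h₃, h₄⟩ := hX
  have hMB : Matrix.fromCols L A * fromRows (X - X * A * Y) Y =
      L * X + (1 - L * X) * A * Y := by
    simp only [fromCols_mul_fromRows, Matrix.mul_sub, Matrix.sub_mul, Matrix.one_mul,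
      Matrix.mul_assoc]
    abel
  have hBM : fromRows (X - X * A * Y) Y * Matrix.fromCols L A = fromBlocks (X * L) 0 0 1 := by
    simp only [fromRows_mul_fromCols, Matrix.sub_mul, Matrix.mul_assoc, hYL, hYA,
      Matrix.mul_zero, Matrix.mul_one, sub_zero, sub_self]
  refine ⟨?_, ?_, ?_, ?_⟩
  · rw [hMB, mul_fromCols]
    congr 1
    · rw [Matrix.add_mul, h₁, Matrix.mul_assoc _ Y, hYL, Matrix.mul_zero, add_zero]
    · rw [Matrix.add_mul, Matrix.mul_assoc _ Y, hYA, Matrix.mul_one, Matrix.sub_mul,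
        Matrix.one_mul, add_sub_cancel]
  · rw [hBM, fromBlocks_mul_fromRows]
    simp [Matrix.mul_sub, ← Matrix.mul_assoc, h₂]
  · rw [hMB, transpose_add, h₃, hsymm]
  · rw [hBM, fromBlocks_transpose, h₄]
    simp

end CommRing

theorem fromCols_replicateCol [Field R] [DecidableEq m] {L : Matrix m n R} {X : Matrix n m R}
    (hX : IsPenroseInverse L X) {a c : m → R} (hc : (1 - L * X) *ᵥ a = c) (hc₀ : c ⬝ᵥ c ≠ 0) :
    IsPenroseInverse (Matrix.fromCols L (replicateCol (Fin 1) a))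
      (fromRows (X - X * replicateCol (Fin 1) a * replicateRow (Fin 1) ((c ⬝ᵥ c)⁻¹ • c))
        (replicateRow (Fin 1) ((c ⬝ᵥ c)⁻¹ • c))) := by
  refine hX.fromCols ?_ ?_ ?_
  · rw [← replicateRow_vecMul, smul_vecMul, ← hc, hX.one_sub_mul_mulVec_vecMul_eq_zero,
      smul_zero, replicateRow_zero]
  · rw [replicateRow_mul_replicateCol, smul_dotProduct, ← hc,
      ← hX.one_sub_mul_mulVec_dotProduct_self, hc, smul_eq_mul, inv_mul_cancel₀ hc₀]
    ext i j
    rw [Subsingleton.elim i j, of_apply, one_apply_eq]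
  · rw [Matrix.mul_assoc, ← Matrix.mul_assoc (1 - L * X), ← replicateCol_mulVec, hc]
    ext i j
    simp only [mul_apply, replicateCol_apply, replicateRow_apply, transpose_apply,
      Finset.univ_unique, Finset.sum_singleton, Pi.smul_apply, smul_eq_mul]
    ring

end IsPenroseInverse

end Matrix

theorem isMoorePenrose_iff {m n : ℕ} (L : Matrix (Fin m) (Fin n) ℝ)
    (X : Matrix (Fin n) (Fin m) ℝ) :
    IsMoorePenrose L X ↔ L.IsPenroseInverse X :=
  Iff.rfl

theorem appendCol_eq_submatrix {m n : ℕ} (L : Matrix (Fin m) (Fin n) ℝ) (a : Fin m → ℝ) :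
    appendCol L a = (fromCols L (replicateCol (Fin 1) a)).submatrix id finSumFinEquiv.symm := by
  ext i j
  induction j using Fin.lastCases <;> simp [appendCol]

/-- if `P a ≠ 0` with `P = I - L L⁺`, the Moore–Penrose pseudoinverse of
`(L, a)` is the block matrix with top block `L⁺ - L⁺ a bᵀ` and bottom row
`bᵀ = (P a)⁺ = (P a)ᵀ / ‖P a‖²`. -/
theorem stmt1 {m n : ℕ} (L : Matrix (Fin m) (Fin n) ℝ) (Lp : Matrix (Fin n) (Fin m) ℝ)
    (hLp : IsMoorePenrose L Lp) (a : Fin m → ℝ)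
    (P : Matrix (Fin m) (Fin m) ℝ) (hP : P = 1 - L * Lp)
    (hPa : P *ᵥ a ≠ 0)
    (b : Fin m → ℝ) (hb : b = fun j => (P *ᵥ a) j / ((P *ᵥ a) ⬝ᵥ (P *ᵥ a)))
    (B : Matrix (Fin (n + 1)) (Fin m) ℝ)
    (hB : B = Matrix.of fun i j =>
      Fin.lastCases (b j) (fun i' => Lp i' j - (Lp *ᵥ a) i' * b j) i) :
    IsMoorePenrose (appendCol L a) B := by
  have hL : L.IsPenroseInverse Lp := (isMoorePenrose_iff L Lp).mp hLp
  have hc : (1 - L * Lp) *ᵥ a = P *ᵥ a := by rw [hP]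
  have hb' : b = ((P *ᵥ a) ⬝ᵥ (P *ᵥ a))⁻¹ • (P *ᵥ a) := by
    ext j
    simp only [hb, Pi.smul_apply, smul_eq_mul, div_eq_inv_mul]
  have hB' : B = (fromRows (Lp - Lp * replicateCol (Fin 1) a * replicateRow (Fin 1) b)
      (replicateRow (Fin 1) b)).submatrix finSumFinEquiv.symm id := by
    ext i j
    induction i using Fin.lastCases <;> simp [hB, mul_apply, mulVec, dotProduct, Finset.sum_mul]
  rw [isMoorePenrose_iff, appendCol_eq_submatrix, hB', hb']
  exact (hL.fromCols_replicateCol hc (mt dotProduct_self_eq_zero.mp hPa)).submatrix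
    (Equiv.refl _) finSumFinEquiv.symm
end

section
/- Let L ∈ ℝ^{m×n}, a ∈ ℝ^m with (I − L L⁺) a ≠ 0, and f ∈ ℝ^m. If q = −(L, a)⁺ f and p ∈ ℝ^{n+1} satisfies p = q, then −qᵀ (L, a)ᵀ f = fᵀ L L⁺ f + |fᵀ (I − L L⁺) a|² / ‖(I − L L⁺) a‖². -/
open Matrix

section Aux

set_option linter.unusedSectionVars false

variable {l m n : Type*} [Fintype m]

lemma aux_mul_vecMulVec (A : Matrix l m ℝ) (x : m → ℝ) (y : n → ℝ) :
    A * vecMulVec x y = vecMulVec (A *ᵥ x) y := by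
  ext i j
  simp only [mul_apply, vecMulVec_apply, mulVec, dotProduct, Finset.sum_mul]
  exact Finset.sum_congr rfl fun k _ => by ring

lemma aux_vecMulVec_mul (x : l → ℝ) (y : m → ℝ) (A : Matrix m n ℝ) :
    vecMulVec x y * A = vecMulVec x (y ᵥ* A) := by
  ext i j
  simp only [mul_apply, vecMulVec_apply, vecMul, dotProduct, Finset.mul_sum]
  exact Finset.sum_congr rfl fun k _ => by ring

lemma aux_vecMulVec_mulVec (x : l → ℝ) (y : m → ℝ) (v : m → ℝ) :
    vecMulVec x y *ᵥ v = (y ⬝ᵥ v) • x := by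
  ext i
  simp only [mulVec, dotProduct, vecMulVec_apply, Pi.smul_apply, smul_eq_mul]
  rw [Finset.sum_mul]
  exact Finset.sum_congr rfl fun k _ => by ring

lemma aux_vecMulVec_zero_right (x : l → ℝ) : vecMulVec x (0 : m → ℝ) = 0 := by
  ext i j; simp [vecMulVec_apply]

lemma aux_vecMulVec_zero_left (y : m → ℝ) : vecMulVec (0 : l → ℝ) y = 0 := by
  ext i j; simp [vecMulVec_apply]

lemma aux_vecMulVec_smul_left (c : ℝ) (x : l → ℝ) (y : m → ℝ) :
    vecMulVec (c • x) y = c • vecMulVec x y := by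
  ext i j; simp [vecMulVec_apply]; ring

end Aux

/-- descent identity
`-qᵀ (L,a)ᵀ f = fᵀ L L⁺ f + |fᵀ (I - L L⁺) a|² / ‖(I - L L⁺) a‖²`
for `q = -(L,a)⁺ f`. -/
theorem stmt2 {m n : ℕ} (L : Matrix (Fin m) (Fin n) ℝ) (Lp : Matrix (Fin n) (Fin m) ℝ)
    (hLp : IsMoorePenrose L Lp) (a : Fin m → ℝ)
    (Mp : Matrix (Fin (n + 1)) (Fin m) ℝ) (hMp : IsMoorePenrose (appendCol L a) Mp)
    (P : Matrix (Fin m) (Fin m) ℝ) (hP : P = 1 - L * Lp)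
    (hPa : P *ᵥ a ≠ 0)
    (f : Fin m → ℝ)
    (q : Fin (n + 1) → ℝ) (hq : q = -(Mp *ᵥ f))
    (p : Fin (n + 1) → ℝ) (hpq : p = q) :
    -(q ⬝ᵥ ((appendCol L a)ᵀ *ᵥ f)) =
      f ⬝ᵥ ((L * Lp) *ᵥ f) +
        (f ⬝ᵥ (P *ᵥ a)) ^ 2 / ((P *ᵥ a) ⬝ᵥ (P *ᵥ a)) := by
  obtain ⟨h1, h2, h3, h4⟩ := hLp
  subst hq hpq hP
  set M : Matrix (Fin m) (Fin (n + 1)) ℝ := appendCol L a with hM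
  set u : Fin m → ℝ := (1 - L * Lp) *ᵥ a with hu
  set s : ℝ := u ⬝ᵥ u with hsdef
  have hs : s ≠ 0 := by
    rw [hsdef, Ne, dotProduct_self_eq_zero]
    exact hPa
  set c : ℝ := s⁻¹ with hc
  set Q : Matrix (Fin m) (Fin m) ℝ := L * Lp + c • vecMulVec u u with hQ
  -- basic identities
  have hLLp2 : (L * Lp) * (L * Lp) = L * Lp := by
    calc (L * Lp) * (L * Lp) = (L * Lp * L) * Lp := by rw [← Matrix.mul_assoc]
    _ = L * Lp := by rw [h1]
  have hPL : (1 - L * Lp) * L = 0 := by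
    rw [Matrix.sub_mul, Matrix.one_mul, h1, sub_self]
  have hPP : (1 - L * Lp) * (1 - L * Lp) = 1 - L * Lp := by
    rw [Matrix.mul_sub, Matrix.mul_one, Matrix.sub_mul, Matrix.one_mul, hLLp2, sub_self,
      sub_zero]
  have hPsym : (1 - L * Lp : Matrix (Fin m) (Fin m) ℝ)ᵀ = 1 - L * Lp := by
    rw [transpose_sub, transpose_one, h3]
  have huL : u ᵥ* L = 0 := by
    rw [hu, vecMul_mulVec, hPsym, hPL, Matrix.vecMul_zero]
  have hLLpu : (L * Lp) *ᵥ u = 0 := by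
    rw [hu, mulVec_mulVec]
    have h5 : (L * Lp) * (1 - L * Lp) = 0 := by
      rw [Matrix.mul_sub, Matrix.mul_one, hLLp2, sub_self]
    rw [h5, Matrix.zero_mulVec]
  have hPu : (1 - L * Lp) *ᵥ u = u := by
    rw [hu, mulVec_mulVec, hPP]
  have huP : u ᵥ* (1 - L * Lp) = u := by
    conv_lhs => rw [← hPsym]
    rw [vecMul_transpose, hPu]
  have hua : u ⬝ᵥ a = s := by
    have h5 : u ⬝ᵥ ((1 - L * Lp) *ᵥ a) = u ⬝ᵥ a := by
      rw [dotProduct_mulVec, huP]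
    rw [hsdef]
    conv_rhs => rw [hu]
    rw [h5]
  have hvuL : vecMulVec u u * L = 0 := by
    rw [aux_vecMulVec_mul, huL, aux_vecMulVec_zero_right]
  have hLLpvu : (L * Lp) * vecMulVec u u = 0 := by
    rw [aux_mul_vecMulVec, hLLpu, aux_vecMulVec_zero_left]
  have hvuvu : vecMulVec u u * vecMulVec u u = s • vecMulVec u u := by
    rw [aux_mul_vecMulVec, aux_vecMulVec_mulVec, ← hsdef, aux_vecMulVec_smul_left]
  have hQsym : Qᵀ = Q := by
    rw [hQ, transpose_add, h3, transpose_smul]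
    congr 1
    ext i j
    simp [vecMulVec_apply, mul_comm]
  have hQa : Q *ᵥ a = a := by
    rw [hQ, Matrix.add_mulVec, Matrix.smul_mulVec, aux_vecMulVec_mulVec, hua,
      smul_smul, hc, inv_mul_cancel₀ hs, one_smul]
    have h5 : u = a - (L * Lp) *ᵥ a := by
      rw [hu, Matrix.sub_mulVec, Matrix.one_mulVec]
    rw [h5]
    abel
  have hQL : Q * L = L := by
    rw [hQ, Matrix.add_mul, h1, Matrix.smul_mul, hvuL, smul_zero, add_zero]
  have hQM : Q * M = M := by
    ext i j
    refine Fin.lastCases ?_ ?_ j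
    · have h5 := congrFun hQa i
      simp only [mulVec, dotProduct] at h5
      have hMl : ∀ k, M k (Fin.last n) = a k := fun k => by
        show Fin.lastCases (a k) (fun j' => L k j') (Fin.last n) = a k
        rw [Fin.lastCases_last]
      simp only [mul_apply, hMl]
      exact h5
    · intro j'
      have h5 := congrFun (congrFun hQL i) j'
      simp only [mul_apply] at h5
      have hMc : ∀ k, M k j'.castSucc = L k j' := fun k => by
        show Fin.lastCases (a k) (fun j'' => L k j'') j'.castSucc = L k j'
        rw [Fin.lastCases_castSucc]
      simp only [mul_apply, hMc]
      exact h5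
  -- Q = M * Y for explicit Y
  set w : Fin (n + 1) → ℝ := Fin.lastCases 1 (fun j => -((Lp *ᵥ a) j)) with hw
  have hMw : M *ᵥ w = u := by
    ext i
    simp only [mulVec, dotProduct, Fin.sum_univ_castSucc]
    have hlast : M i (Fin.last n) * w (Fin.last n) = a i := by
      have e1 : M i (Fin.last n) = a i := by
        show Fin.lastCases (a i) (fun j' => L i j') (Fin.last n) = a i
        rw [Fin.lastCases_last]
      have e2 : w (Fin.last n) = 1 := by
        show Fin.lastCases (motive := fun _ => ℝ) 1 (fun j => -((Lp *ᵥ a) j)) (Fin.last n) = 1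
        rw [Fin.lastCases_last]
      rw [e1, e2, mul_one]
    have hcs : ∀ j : Fin n, M i j.castSucc * w j.castSucc = -(L i j * (Lp *ᵥ a) j) := by
      intro j
      have e1 : M i j.castSucc = L i j := by
        show Fin.lastCases (a i) (fun j' => L i j') j.castSucc = L i j
        rw [Fin.lastCases_castSucc]
      have e2 : w j.castSucc = -((Lp *ᵥ a) j) := by
        show Fin.lastCases (motive := fun _ => ℝ) 1 (fun j => -((Lp *ᵥ a) j)) j.castSucc = -((Lp *ᵥ a) j)
        rw [Fin.lastCases_castSucc]
      rw [e1, e2]; ring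
    rw [hlast]
    simp only [hcs]
    have h5 : u i = a i - (L *ᵥ (Lp *ᵥ a)) i := by
      rw [hu, Matrix.sub_mulVec, Matrix.one_mulVec, ← mulVec_mulVec]
      simp
    rw [h5]
    simp only [mulVec, dotProduct, Finset.sum_neg_distrib]
    ring
  set Y : Matrix (Fin (n + 1)) (Fin m) ℝ :=
    Matrix.of (fun i j => (Fin.lastCases 0 (fun i' => Lp i' j) i : ℝ)) + c • vecMulVec w u
    with hY
  have hMY : M * Y = Q := by
    rw [hY, Matrix.mul_add, Matrix.mul_smul, aux_mul_vecMulVec, hMw, hQ]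
    congr 1
    ext i j
    simp only [mul_apply, Matrix.of_apply, Fin.sum_univ_castSucc]
    have hl : M i (Fin.last n) * (Fin.lastCases 0 (fun i' => Lp i' j) (Fin.last n) : ℝ) = 0 := by
      rw [Fin.lastCases_last, mul_zero]
    have hcs : ∀ k : Fin n,
        M i k.castSucc * (Fin.lastCases 0 (fun i' => Lp i' j) k.castSucc : ℝ)
          = L i k * Lp k j := by
      intro k
      have e1 : M i k.castSucc = L i k := by
        show Fin.lastCases (a i) (fun j' => L i j') k.castSucc = L i k
        rw [Fin.lastCases_castSucc]
      rw [e1, Fin.lastCases_castSucc]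
    simp only [hcs, hl, add_zero]
  -- uniqueness of the projection
  set E : Matrix (Fin m) (Fin m) ℝ := M * Mp with hE
  have hEM : E * M = M := hMp.1
  have hEsym : Eᵀ = E := hMp.2.2.1
  have hQE : Q * E = E := by rw [hE, ← Matrix.mul_assoc, hQM]
  have hEQ : E * Q = Q := by rw [← hMY, ← Matrix.mul_assoc, hEM]
  have hEQ2 : E * Q = E := by
    calc E * Q = (Qᵀ * Eᵀ)ᵀ := by rw [transpose_mul, transpose_transpose, transpose_transpose]
    _ = (Q * E)ᵀ := by rw [hQsym, hEsym]
    _ = E := by rw [hQE, hEsym]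
  have hQeqE : Q = E := by rw [← hEQ, hEQ2]
  -- final computation
  have lhs_eq : -((-(Mp *ᵥ f)) ⬝ᵥ (Mᵀ *ᵥ f)) = f ⬝ᵥ (E *ᵥ f) := by
    rw [neg_dotProduct, neg_neg, mulVec_transpose, dotProduct_comm, ← dotProduct_mulVec,
      hE, ← mulVec_mulVec]
  rw [lhs_eq, ← hQeqE, hQ, Matrix.add_mulVec, dotProduct_add, Matrix.smul_mulVec,
    dotProduct_smul, aux_vecMulVec_mulVec, dotProduct_smul]
  congr 1
  rw [smul_eq_mul, smul_eq_mul, hc, div_eq_inv_mul, dotProduct_comm u f, sq]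
end

section
/- Let L ∈ ℝ^{m×n}, a ∈ ℝ^m with P a ≠ 0 where P = I − L L⁺, and f ∈ ℝ^m. Let q = −(L, a)⁺ f. Then ‖f + (L, a) q‖² = fᵀ P f − |fᵀ P a|² / ‖P a‖². -/
open Matrix

lemma mul_appendCol {m n : ℕ} (A : Matrix (Fin m) (Fin m) ℝ)
    (L : Matrix (Fin m) (Fin n) ℝ) (a : Fin m → ℝ) :
    A * appendCol L a = appendCol (A * L) (A *ᵥ a) := by
  ext i j
  induction j using Fin.lastCases with
  | last => simp [appendCol, Matrix.mul_apply, Matrix.mulVec, dotProduct]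
  | cast j' => simp [appendCol, Matrix.mul_apply]

lemma appendCol_injL {m n : ℕ} {L₁ L₂ : Matrix (Fin m) (Fin n) ℝ} {a₁ a₂ : Fin m → ℝ}
    (h : appendCol L₁ a₁ = appendCol L₂ a₂) : L₁ = L₂ ∧ a₁ = a₂ := by
  constructor
  · ext i j
    have := congrFun (congrFun h i) (Fin.castSucc j)
    simpa [appendCol] using this
  · ext i
    have := congrFun (congrFun h i) (Fin.last n)
    simpa [appendCol] using this

lemma mul_vecMulVec' {m : ℕ} (A : Matrix (Fin m) (Fin m) ℝ) (w v : Fin m → ℝ) :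
    A * vecMulVec w v = vecMulVec (A *ᵥ w) v := by
  ext i j
  simp [Matrix.mul_apply, vecMulVec_apply, Matrix.mulVec, dotProduct,
    Finset.sum_mul, mul_assoc]

lemma vecMulVec_mul' {m k : ℕ} (w : Fin m → ℝ) (v : Fin m → ℝ) (B : Matrix (Fin m) (Fin k) ℝ) :
    vecMulVec w v * B = vecMulVec w (v ᵥ* B) := by
  ext i j
  simp [Matrix.mul_apply, vecMulVec_apply, Matrix.vecMul, dotProduct,
    Finset.mul_sum, mul_assoc]

lemma vecMulVec_mulVec' {m : ℕ} (w v x : Fin m → ℝ) :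
    vecMulVec w v *ᵥ x = (v ⬝ᵥ x) • w := by
  ext i
  simp [Matrix.mulVec, vecMulVec_apply, dotProduct, Finset.mul_sum, mul_assoc,
    mul_comm, mul_left_comm]

lemma vecMulVec_transpose' {m : ℕ} (w v : Fin m → ℝ) :
    (vecMulVec w v)ᵀ = vecMulVec v w := by
  ext i j
  simp [vecMulVec_apply, mul_comm]

/-- `‖f + (L,a) q‖² = fᵀ P f - |fᵀ P a|² / ‖P a‖²` for
`q = -(L,a)⁺ f` and `P = I - L L⁺`, assuming `P a ≠ 0`. -/
theorem stmt5 {m n : ℕ} (L : Matrix (Fin m) (Fin n) ℝ) (Lp : Matrix (Fin n) (Fin m) ℝ)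
    (hLp : IsMoorePenrose L Lp) (a : Fin m → ℝ)
    (P : Matrix (Fin m) (Fin m) ℝ) (hP : P = 1 - L * Lp)
    (hPa : P *ᵥ a ≠ 0)
    (f : Fin m → ℝ)
    (Mp : Matrix (Fin (n + 1)) (Fin m) ℝ) (hMp : IsMoorePenrose (appendCol L a) Mp)
    (q : Fin (n + 1) → ℝ) (hq : q = -(Mp *ᵥ f))
    (r : Fin m → ℝ) (hr : r = f + (appendCol L a) *ᵥ q) :
    r ⬝ᵥ r = f ⬝ᵥ (P *ᵥ f) - (f ⬝ᵥ (P *ᵥ a)) ^ 2 / ((P *ᵥ a) ⬝ᵥ (P *ᵥ a)) := by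
  obtain ⟨g1, g2, g3, g4⟩ := hLp
  obtain ⟨h1, h2, h3, h4⟩ := hMp
  set M : Matrix (Fin m) (Fin (n + 1)) ℝ := appendCol L a with hM
  set C : Matrix (Fin m) (Fin m) ℝ := M * Mp with hC
  -- basic facts about C
  have hCM : C * M = M := h1
  have hCL : C * L = L := by
    have := hCM
    rw [hM, mul_appendCol] at this
    exact (appendCol_injL this).1
  have hCa : C *ᵥ a = a := by
    have := hCM
    rw [hM, mul_appendCol] at this
    exact (appendCol_injL this).2
  have hCsym : Cᵀ = C := h3
  have hCC : C * C = C := by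
    rw [hC, ← Matrix.mul_assoc, h1]
  -- basic facts about P
  have hLLp : (L * Lp) * (L * Lp) = L * Lp := by
    rw [← Matrix.mul_assoc, g1]
  have hPsym : Pᵀ = P := by
    rw [hP, Matrix.transpose_sub, Matrix.transpose_one, g3]
  have hPL : P * L = 0 := by
    rw [hP, Matrix.sub_mul, Matrix.one_mul, Matrix.mul_assoc, ← Matrix.mul_assoc, g1,
      sub_self]
  have hPP : P * P = P := by
    rw [hP, Matrix.sub_mul, Matrix.one_mul, Matrix.mul_sub, Matrix.mul_one, hLLp]
    abel
  set w : Fin m → ℝ := P *ᵥ a with hw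
  have hwP : w = a ᵥ* P := by
    conv_lhs => rw [hw, ← hPsym, Matrix.mulVec_transpose]
  have hs : w ⬝ᵥ w ≠ 0 := fun h => hPa (dotProduct_self_eq_zero.mp h)
  have hwP' : w ᵥ* P = w := by
    conv_lhs => rw [hwP, Matrix.vecMul_vecMul, hPP]
    exact hwP.symm
  have hwa : w ⬝ᵥ a = w ⬝ᵥ w := by
    conv_rhs => rw [hw]
    rw [Matrix.dotProduct_mulVec, hwP']
  have hwL : w ᵥ* L = 0 := by
    rw [hwP, Matrix.vecMul_vecMul, hPL, Matrix.vecMul_zero]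
  -- the explicit projector D
  set s : ℝ := w ⬝ᵥ w with hsdef
  set D : Matrix (Fin m) (Fin m) ℝ := L * Lp + s⁻¹ • vecMulVec w w with hD
  have hwsub : w = a - (L * Lp) *ᵥ a := by
    rw [hw, hP, Matrix.sub_mulVec, Matrix.one_mulVec]
  have hCLLp : C * (L * Lp) = L * Lp := by rw [← Matrix.mul_assoc, hCL]
  have hCw : C *ᵥ w = w := by
    rw [hwsub, Matrix.mulVec_sub, hCa, Matrix.mulVec_mulVec, hCLLp]
  have hCD : C * D = D := by
    rw [hD, Matrix.mul_add, hCLLp, Matrix.mul_smul, mul_vecMulVec', hCw]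
  have hDL : D * L = L := by
    rw [hD, Matrix.add_mul, Matrix.mul_assoc, ← Matrix.mul_assoc, g1, Matrix.smul_mul, vecMulVec_mul', hwL]
    have : vecMulVec w (0 : Fin n → ℝ) = 0 := by
      ext i j; simp [vecMulVec_apply]
    rw [this, smul_zero, add_zero]
  have hDa : D *ᵥ a = a := by
    rw [hD, Matrix.add_mulVec, Matrix.smul_mulVec, vecMulVec_mulVec', hwa,
      smul_smul, inv_mul_cancel₀ hs, one_smul, hwsub]
    abel
  have hDM : D * M = M := by
    rw [hM, mul_appendCol, hDL, hDa]
  have hDC : D * C = C := by rw [hC, ← Matrix.mul_assoc, hDM]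
  have hDsym : Dᵀ = D := by
    rw [hD, Matrix.transpose_add, g3, Matrix.transpose_smul, vecMulVec_transpose']
  have hCD' : C * D = C := by
    have := congrArg Matrix.transpose hDC
    rwa [Matrix.transpose_mul, hCsym, hDsym] at this
  have hCeqD : C = D := hCD'.symm.trans hCD
  -- final computation
  have hrr : r = f - C *ᵥ f := by
    rw [hr, hq, Matrix.mulVec_neg, Matrix.mulVec_mulVec, ← hC]
    abel
  have hfCf : (C *ᵥ f) ⬝ᵥ (C *ᵥ f) = f ⬝ᵥ (C *ᵥ f) := by
    have hCf : C *ᵥ f = f ᵥ* C := by rw [← hCsym, Matrix.mulVec_transpose, hCsym]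
    rw [Matrix.dotProduct_mulVec, hCf, Matrix.vecMul_vecMul, hCC]
    exact dotProduct_comm _ _
  have hcomm : (C *ᵥ f) ⬝ᵥ f = f ⬝ᵥ (C *ᵥ f) := dotProduct_comm _ _
  have key : r ⬝ᵥ r = f ⬝ᵥ f - f ⬝ᵥ (C *ᵥ f) := by
    rw [hrr, sub_dotProduct, dotProduct_sub, dotProduct_sub, hfCf,
      hcomm]
    ring
  rw [key, hCeqD]
  have hDf : f ⬝ᵥ (D *ᵥ f) =
      f ⬝ᵥ ((L * Lp) *ᵥ f) + s⁻¹ * ((w ⬝ᵥ f) * (f ⬝ᵥ w)) := by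
    rw [hD, Matrix.add_mulVec, dotProduct_add, Matrix.smul_mulVec,
      vecMulVec_mulVec', dotProduct_smul, dotProduct_smul, smul_eq_mul,
      smul_eq_mul]
  have hPf : f ⬝ᵥ (P *ᵥ f) = f ⬝ᵥ f - f ⬝ᵥ ((L * Lp) *ᵥ f) := by
    rw [hP, Matrix.sub_mulVec, Matrix.one_mulVec, dotProduct_sub]
  rw [hDf, hPf, dotProduct_comm w f]
  field_simp
  ring
end

section
/- Let L ∈ ℝ^{m×n}, a ∈ ℝ^m with a ≠ 0, f ∈ ℝ^m, P = I − L L⁺, d = −L⁺ f and δ = −aᵀ P f / ‖a‖². Then −(dᵀ Lᵀ f + δ aᵀ f) = fᵀ L L⁺ f + (fᵀ P a)(aᵀ f)/‖a‖², and moreover fᵀ L L⁺ f + fᵀ P a aᵀ f / ‖a‖² ≥ 0. -/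
open Matrix

lemma dp_self_nonneg {k : ℕ} (v : Fin k → ℝ) : 0 ≤ v ⬝ᵥ v :=
  Finset.sum_nonneg fun i _ => mul_self_nonneg (v i)

lemma dp_self_pos {k : ℕ} {v : Fin k → ℝ} (hv : v ≠ 0) : 0 < v ⬝ᵥ v :=
  lt_of_le_of_ne (dp_self_nonneg v) fun h => hv (dotProduct_self_eq_zero.mp h.symm)

lemma cauchy {k : ℕ} (a g : Fin k → ℝ) :
    (a ⬝ᵥ g) ^ 2 * (a ⬝ᵥ a) ≤ (a ⬝ᵥ a) ^ 2 * (g ⬝ᵥ g) := by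
  have h := dp_self_nonneg ((a ⬝ᵥ g) • a - (a ⬝ᵥ a) • g)
  simp only [dotProduct_sub, sub_dotProduct, dotProduct_smul, smul_dotProduct,
    smul_eq_mul] at h
  rw [dotProduct_comm g a] at h
  nlinarith [h]

/-- for the orthogonal-matching direction with `d = -L⁺ f`,
`δ = -aᵀ P f / ‖a‖²`, the descent satisfies
`-(dᵀ Lᵀ f + δ aᵀ f) = fᵀ L L⁺ f + (fᵀ P a)(aᵀ f)/‖a‖²` and this quantity is
nonnegative. -/
theorem stmt7 {m n : ℕ} (L : Matrix (Fin m) (Fin n) ℝ) (Lp : Matrix (Fin n) (Fin m) ℝ)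
    (hLp : IsMoorePenrose L Lp)
    (a : Fin m → ℝ) (ha : a ≠ 0)
    (f : Fin m → ℝ)
    (P : Matrix (Fin m) (Fin m) ℝ) (hP : P = 1 - L * Lp)
    (d : Fin n → ℝ) (hd : d = -(Lp *ᵥ f))
    (δ : ℝ) (hδ : δ = -(a ⬝ᵥ (P *ᵥ f)) / (a ⬝ᵥ a)) :
    -(d ⬝ᵥ (Lᵀ *ᵥ f) + δ * (a ⬝ᵥ f)) =
      f ⬝ᵥ ((L * Lp) *ᵥ f) + (f ⬝ᵥ (P *ᵥ a)) * (a ⬝ᵥ f) / (a ⬝ᵥ a) ∧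
    0 ≤ f ⬝ᵥ ((L * Lp) *ᵥ f) + (f ⬝ᵥ (P *ᵥ a)) * (a ⬝ᵥ f) / (a ⬝ᵥ a) := by
  obtain ⟨h1, h2, h3, h4⟩ := hLp
  have hA : 0 < a ⬝ᵥ a := dp_self_pos ha
  set M := L * Lp with hM
  -- P is symmetric
  have hPT : Pᵀ = P := by
    rw [hP, transpose_sub, transpose_one, h3]
  -- symmetric move of P across the dot product
  have hsym : f ⬝ᵥ (P *ᵥ a) = a ⬝ᵥ (P *ᵥ f) := by
    rw [dotProduct_mulVec, ← mulVec_transpose, hPT, dotProduct_comm]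
  -- M is symmetric idempotent
  have hMT : Mᵀ = M := h3
  have hM2 : M * M = M := by
    calc M * M = L * (Lp * L * Lp) := by rw [hM]; simp only [Matrix.mul_assoc]
    _ = M := by rw [h2]
  set g : Fin m → ℝ := M *ᵥ f with hg
  -- fᵀ M f = gᵀ g
  have hff : f ⬝ᵥ (M *ᵥ f) = g ⬝ᵥ g := by
    have : g ⬝ᵥ g = f ⬝ᵥ (M *ᵥ f) := by
      rw [hg, dotProduct_mulVec (M *ᵥ f) M f, ← mulVec_transpose, hMT,
        mulVec_mulVec, hM2, dotProduct_comm]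
    exact this.symm
  -- decomposition f = g + Pf
  have hdec : a ⬝ᵥ f = a ⬝ᵥ g + a ⬝ᵥ (P *ᵥ f) := by
    rw [hg, ← dotProduct_add, ← add_mulVec, hP]
    simp
  -- the d-term
  have hdL : d ⬝ᵥ (Lᵀ *ᵥ f) = -(f ⬝ᵥ (M *ᵥ f)) := by
    rw [hd, neg_dotProduct, dotProduct_mulVec (Lp *ᵥ f) Lᵀ f, ← mulVec_transpose,
      transpose_transpose, mulVec_mulVec, ← hM, dotProduct_comm]
  constructor
  · rw [hdL, hδ, hsym]
    field_simp
    ring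
  · rw [hff, hsym, hdec]
    have hCS := cauchy a g
    have key : 0 ≤ (a ⬝ᵥ a) * (g ⬝ᵥ g) + (a ⬝ᵥ (P *ᵥ f)) * (a ⬝ᵥ g + a ⬝ᵥ (P *ᵥ f)) := by
      nlinarith [sq_nonneg (a ⬝ᵥ g + a ⬝ᵥ (P *ᵥ f)), sq_nonneg (a ⬝ᵥ g - a ⬝ᵥ (P *ᵥ f)),
        sq_nonneg (a ⬝ᵥ g + 2 * (a ⬝ᵥ (P *ᵥ f))), hA, dp_self_nonneg g]
    have := div_nonneg key hA.le
    calc (0:ℝ) ≤ ((a ⬝ᵥ a) * (g ⬝ᵥ g) + (a ⬝ᵥ (P *ᵥ f)) * (a ⬝ᵥ g + a ⬝ᵥ (P *ᵥ f))) / (a ⬝ᵥ a) := this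
    _ = g ⬝ᵥ g + (a ⬝ᵥ (P *ᵥ f)) * (a ⬝ᵥ g + a ⬝ᵥ (P *ᵥ f)) / (a ⬝ᵥ a) := by
        field_simp
end

section
/- Let f : ℝ^N → ℝ^m be twice continuously differentiable, x̂ ∈ ℝ^N with f(x̂) = 0, and suppose a sequence (x_k) converges to x̂ and satisfies x_{k+1} = x_k + p_k where p_k = −A_k⁺ f(x_k) for matrices A_k ∈ ℝ^{m×N} agreeing with the Jacobian J(x_k) on a subset of columns (zero elsewhere), with A_k⁺ A_k (x̂ − x_k) = x̂ − x_k and ‖A_k⁺‖ ≤ C uniformly. Then (x_k) converges to x̂ quadratically: ‖x_{k+1} − x̂‖ ≤ C' ‖x_k − x̂‖² for some constant C' and all sufficiently large k. -/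
open Matrix Filter

/-- the Euclidean norm of a vector -/
noncomputable def enorm {k : ℕ} (v : Fin k → ℝ) : ℝ := Real.sqrt (v ⬝ᵥ v)

/-!
Where `A_k` differs from the Jacobian `J(x_k)`, its column is zero, and there the coordinate of
`x̂ - x_k` vanishes, because `x̂ - x_k` is fixed by the symmetric projector `A_k⁺ A_k`, whose
corresponding row is zero. Hence `A_k (x̂ - x_k) = J(x_k) (x̂ - x_k)`, so the update gives
`x_{k+1} - x̂ = A_k⁺ r_k` with the Taylor remainder `r_k = f(x̂) - f(x_k) - J(x_k)(x̂ - x_k)`.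
A Lipschitz bound on `J` near `x̂` makes `r_k = O(‖x_k - x̂‖²)`, and `‖A_k⁺‖ ≤ C` finishes.
-/

open Asymptotics Topology

section Taylor

variable {E F : Type*} [NormedAddCommGroup E] [NormedSpace ℝ E]
  [NormedAddCommGroup F] [NormedSpace ℝ F] {f : E → F}

theorem Convex.norm_image_sub_sub_fderiv_le {s : Set E} {K : NNReal} (hs : Convex ℝ s)
    (hdiff : ∀ z ∈ s, DifferentiableAt ℝ f z) (hlip : LipschitzOnWith K (fderiv ℝ f) s)
    {x y : E} (hx : x ∈ s) (hy : y ∈ s) :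
    ‖f y - f x - fderiv ℝ f x (y - x)‖ ≤ K * ‖y - x‖ ^ 2 := by
  have hseg : segment ℝ x y ⊆ s := hs.segment_subset hx hy
  have hbound : ∀ z ∈ segment ℝ x y, ‖fderiv ℝ f z - fderiv ℝ f x‖ ≤ K * ‖y - x‖ := by
    intro z hz
    calc ‖fderiv ℝ f z - fderiv ℝ f x‖ ≤ K * dist z x := by
          rw [← dist_eq_norm]; exact hlip.dist_le_mul z (hseg hz) x hx
      _ ≤ K * dist y x := by
          gcongr
          rw [dist_comm z, dist_comm y, ← dist_add_dist_of_mem_segment hz]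
          exact le_add_of_nonneg_right dist_nonneg
      _ = K * ‖y - x‖ := by rw [dist_eq_norm]
  calc ‖f y - f x - fderiv ℝ f x (y - x)‖ ≤ K * ‖y - x‖ * ‖y - x‖ :=
        (convex_segment x y).norm_image_sub_le_of_norm_hasFDerivWithin_le'
          (fun z hz => (hdiff z (hseg hz)).hasFDerivAt.hasFDerivWithinAt) hbound
          (left_mem_segment ℝ x y) (right_mem_segment ℝ x y)
    _ = K * ‖y - x‖ ^ 2 := by ring

theorem ContDiffAt.isBigO_image_sub_sub_fderiv {a : E} (hf : ContDiffAt ℝ 2 f a) :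
    (fun x => f a - f x - fderiv ℝ f x (a - x)) =O[𝓝 a] fun x => ‖x - a‖ ^ 2 := by
  obtain ⟨K, t, ht, hlip⟩ := (hf.fderiv_right (m := 1) (by norm_num)).exists_lipschitzOnWith
  have hdiff : ∀ᶠ z in 𝓝 a, DifferentiableAt ℝ f z :=
    (hf.eventually (by simp)).mono fun z hz => hz.differentiableAt (by norm_num)
  obtain ⟨ε, hε, hball⟩ := Metric.mem_nhds_iff.1 (inter_mem ht hdiff)
  refine IsBigO.of_bound K (mem_of_superset (Metric.ball_mem_nhds a hε) fun x hx => ?_)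
  have h := (convex_ball a ε).norm_image_sub_sub_fderiv_le (f := f)
    (fun z hz => (hball hz).2) (hlip.mono fun z hz => (hball hz).1) hx (Metric.mem_ball_self hε)
  rwa [Set.mem_ofPred_eq, norm_pow, norm_norm, norm_sub_rev x]

end Taylor

theorem enorm_nonneg {k : ℕ} (v : Fin k → ℝ) : 0 ≤ _root_.enorm v := Real.sqrt_nonneg _

theorem enorm_eq_norm_symm_equiv {k : ℕ} (v : Fin k → ℝ) :
    _root_.enorm v = ‖(EuclideanSpace.equiv (Fin k) ℝ).symm v‖ := by
  simp [_root_.enorm, EuclideanSpace.norm_eq, dotProduct, sq]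

theorem isBigO_enorm_left {α : Type*} {k : ℕ} (g : α → Fin k → ℝ) (l : Filter α) :
    (fun a => _root_.enorm (g a)) =O[l] g := by
  simp only [enorm_eq_norm_symm_equiv]
  exact ((EuclideanSpace.equiv (Fin k) ℝ).symm.isBigO_comp g l).norm_left

theorem isBigO_enorm_right {α : Type*} {k : ℕ} (g : α → Fin k → ℝ) (l : Filter α) :
    g =O[l] fun a => _root_.enorm (g a) := by
  simp only [enorm_eq_norm_symm_equiv]
  exact ((EuclideanSpace.equiv (Fin k) ℝ).symm.isBigO_comp_rev g l).norm_right

namespace Matrix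

variable {m n R : Type*} [Fintype n] [CommSemiring R]

theorem apply_eq_zero_of_col_eq_zero [Fintype m] {B : Matrix n m R} {L : Matrix m n R}
    (hsymm : (B * L)ᵀ = B * L) {v : n → R} (hv : B *ᵥ (L *ᵥ v) = v) {j : n}
    (hj : ∀ i, L i j = 0) : v j = 0 := by
  rw [← hv, mulVec_mulVec, ← hsymm, mulVec_transpose, ← vecMul_vecMul, vecMul, dotProduct]
  simp [hj]

theorem mulVec_eq_of_col_eq_or_apply_eq_zero [DecidableEq n] {L : Matrix m n R}
    {T : (n → R) →ₗ[R] (m → R)} {v : n → R}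
    (h : ∀ j, (∀ i, L i j = T (Pi.single j 1) i) ∨ v j = 0) : L *ᵥ v = T v := by
  rw [← LinearMap.toMatrix'_mulVec]
  funext i
  refine Finset.sum_congr rfl fun j _ => ?_
  rcases h j with hcol | hvj
  · simp only [hcol i, LinearMap.toMatrix'_apply]
  · rw [hvj, mul_zero, mul_zero]

end Matrix

/-- quadratic convergence of the greedy Gauss–Newton iteration
`x_{k+1} = x_k - A_k⁺ f(x_k)`, where each `A_k` agrees with the Jacobian of `f`
at `x_k` on a subset of columns and is zero elsewhere, `A_k⁺ A_k (x̂ - x_k) = x̂ - x_k`,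
and `‖A_k⁺‖ ≤ C` uniformly, assuming `x_k → x̂` with `f(x̂) = 0`. -/
theorem stmt11 {N m : ℕ} (f : (Fin N → ℝ) → (Fin m → ℝ)) (hf : ContDiff ℝ 2 f)
    (xhat : Fin N → ℝ) (hfx : f xhat = 0)
    (x : ℕ → (Fin N → ℝ)) (hconv : Tendsto x atTop (nhds xhat))
    (A : ℕ → Matrix (Fin m) (Fin N) ℝ) (Ap : ℕ → Matrix (Fin N) (Fin m) ℝ)
    (hMP : ∀ k, IsMoorePenrose (A k) (Ap k))
    (hcols : ∀ k, ∀ j : Fin N,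
      (∀ i, A k i j = fderiv ℝ f (x k) (Pi.single j 1) i) ∨ (∀ i, A k i j = 0))
    (hfix : ∀ k, Ap k *ᵥ (A k *ᵥ (xhat - x k)) = xhat - x k)
    (C : ℝ) (hC : ∀ k, ∀ v : Fin m → ℝ, _root_.enorm (Ap k *ᵥ v) ≤ C * _root_.enorm v)
    (hupd : ∀ k, x (k + 1) = x k - Ap k *ᵥ f (x k)) :
    ∃ C' : ℝ, ∃ K : ℕ, ∀ k ≥ K,
      _root_.enorm (x (k + 1) - xhat) ≤ C' * _root_.enorm (x k - xhat) ^ 2 := by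
  set r : (Fin N → ℝ) → Fin m → ℝ := fun y => f xhat - f y - fderiv ℝ f y (xhat - y)
  have hA : ∀ k, A k *ᵥ (xhat - x k) = fderiv ℝ f (x k) (xhat - x k) := fun k =>
    mulVec_eq_of_col_eq_or_apply_eq_zero fun j => (hcols k j).imp_right
      (apply_eq_zero_of_col_eq_zero (hMP k).2.2.2 (hfix k))
  have herr : ∀ k, x (k + 1) - xhat = Ap k *ᵥ r (x k) := fun k => by
    rw [hupd k, mulVec_sub, mulVec_sub, hfx, ← hA, hfix k, mulVec_zero]
    abel
  have hr : (fun y => _root_.enorm (r y)) =O[𝓝 xhat] fun y => _root_.enorm (y - xhat) ^ 2 :=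
    ((isBigO_enorm_left r _).trans hf.contDiffAt.isBigO_image_sub_sub_fderiv).trans
      ((isBigO_enorm_right (· - xhat) _).norm_left.pow 2)
  obtain ⟨c, hc⟩ := hr.bound
  obtain ⟨K, hK⟩ := eventually_atTop.1 (hconv.eventually hc)
  refine ⟨max C 0 * c, K, fun k hk => ?_⟩
  have hk := hK k hk
  rw [Real.norm_of_nonneg (enorm_nonneg _), Real.norm_of_nonneg (by positivity)] at hk
  calc _root_.enorm (x (k + 1) - xhat) ≤ C * _root_.enorm (r (x k)) := herr k ▸ hC k _
    _ ≤ max C 0 * _root_.enorm (r (x k)) :=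
        mul_le_mul_of_nonneg_right (le_max_left C 0) (enorm_nonneg _)
    _ ≤ max C 0 * (c * _root_.enorm (x k - xhat) ^ 2) := by gcongr
    _ = max C 0 * c * _root_.enorm (x k - xhat) ^ 2 := by ring
end

section
/- Let L ∈ ℝ^{m×n}, a ∈ ℝ^m, f ∈ ℝ^m, and suppose P a = 0 where P = I − L L⁺ (i.e., a ∈ range(L)) and L L⁺ f = 0 (i.e., f ⊥ range(L)). Then the Gauss–Newton direction q = −(L, a)⁺ f satisfies qᵀ (L, a)ᵀ f = 0, i.e., it provides no descent for ½‖f‖² at the current point. -/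
open Matrix

/-- degenerate case — if `a ∈ range(L)` (i.e. `(I - L L⁺) a = 0`)
and `f ⊥ range(L)` (i.e. `L L⁺ f = 0`), then the Gauss–Newton direction
`q = -(L,a)⁺ f` gives no descent: `qᵀ (L,a)ᵀ f = 0`. -/
theorem stmt19 {m n : ℕ} (L : Matrix (Fin m) (Fin n) ℝ) (Lp : Matrix (Fin n) (Fin m) ℝ)
    (hLp : IsMoorePenrose L Lp)
    (a f : Fin m → ℝ)
    (ha : (1 - L * Lp) *ᵥ a = 0)
    (hf : (L * Lp) *ᵥ f = 0)
    (Mp : Matrix (Fin (n + 1)) (Fin m) ℝ) (hMp : IsMoorePenrose (appendCol L a) Mp)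
    (q : Fin (n + 1) → ℝ) (hq : q = -(Mp *ᵥ f)) :
    q ⬝ᵥ ((appendCol L a)ᵀ *ᵥ f) = 0 := by
  obtain ⟨h1, h2, h3, h4⟩ := hLp
  -- a = (L * Lp) *ᵥ a
  have ha' : a = (L * Lp) *ᵥ a := by
    have := ha
    rw [sub_mulVec, one_mulVec, sub_eq_zero] at this
    exact this
  -- Lᵀ *ᵥ f = 0
  have hLtf : Lᵀ *ᵥ f = 0 := by
    have hL : Lᵀ = Lᵀ * (L * Lp) := by
      conv_lhs => rw [← h1]
      rw [Matrix.transpose_mul, h3]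
    rw [hL, ← mulVec_mulVec, hf, mulVec_zero]
  -- a ⬝ᵥ f = 0
  have haf : a ⬝ᵥ f = 0 := by
    calc a ⬝ᵥ f = ((L * Lp) *ᵥ a) ⬝ᵥ f := by rw [← ha']
    _ = a ⬝ᵥ ((L * Lp)ᵀ *ᵥ f) := by
          rw [Matrix.dotProduct_mulVec, Matrix.vecMul_transpose]
    _ = 0 := by rw [h3, hf, dotProduct_zero]
  have hM : (appendCol L a)ᵀ *ᵥ f = 0 := by
    funext j
    refine Fin.lastCases ?_ ?_ j
    · simpa [appendCol, mulVec, dotProduct, mul_comm] using haf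
    · intro j'
      have := congrFun hLtf j'
      simpa [appendCol, mulVec, dotProduct] using this
  rw [hM, dotProduct_zero]
end
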